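/- The function φ(α) = γ_⋆(α) - (1-α), where γ_⋆(α) = (2/π)·arctan(√(2/(πα)−1)) − α·√(2/(πα)−1), has derivative φ'(α) = 1 − √(2/(πα) − 1) for α ∈ (0, 2/π), attains its minimum value −1/2 at α = 1/π, and satisfies φ(α) < 0 on (0, 2/π) with lim_{α→0+} φ(α) = 0. -/

import Mathlib

/-!
Write `s = √(2/(πα) - 1)`, so that `α (1 + s²) = 2/π`. Differentiating, the terms containing `s'`
cancel and `φ' = 1 - s`, which changes sign exactly where `s = 1`, i.e. at `α = 1/π`. Eliminating
`α` gives `φ = (2/π) (arctan s + (1 - s)/(1 + s²) - π/2)`, which is negative: for `s ≥ 1` the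
fraction is nonpositive, and for `s < 1` use `arctan s < s` and `s + (1 - s)/(1 + s²) ≤ 1 < π/2`.
As `α → 0⁺`, `s → ∞` while `α s = √(2α/π - α²) → 0`, so `φ → (2/π)(π/2) - 1 = 0`.
-/

open Real Filter Set Topology

lemma arctan_lt_self {x : ℝ} (hx : 0 < x) : arctan x < x := by
  simpa [tan_arctan] using lt_tan (arctan_pos.2 hx) (arctan_lt_pi_div_two x)

lemma arctan_add_one_sub_div_lt_pi_div_two {s : ℝ} (hs : 0 < s) :
    arctan s + (1 - s) / (1 + s ^ 2) < π / 2 := by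
  rcases le_or_gt 1 s with h1 | h1
  · have : (1 - s) / (1 + s ^ 2) ≤ 0 := div_nonpos_of_nonpos_of_nonneg (by linarith) (by positivity)
    linarith [arctan_lt_pi_div_two s]
  · have : (1 - s) / (1 + s ^ 2) ≤ 1 - s := by
      rw [div_le_iff₀ (by positivity)]; nlinarith
    linarith [arctan_lt_self hs, pi_gt_three]

noncomputable def sqrtTerm (α : ℝ) : ℝ := √(2 / (π * α) - 1)

noncomputable def phi (α : ℝ) : ℝ := 2 / π * arctan (sqrtTerm α) - α * sqrtTerm α - (1 - α)

section
variable {α : ℝ}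

lemma one_lt_two_div_pi_mul (h0 : 0 < α) (h : α < 2 / π) : 1 < 2 / (π * α) := by
  rw [one_lt_div (by positivity)]
  rwa [lt_div_iff₀ pi_pos, mul_comm] at h

lemma sqrtTerm_pos (h0 : 0 < α) (h : α < 2 / π) : 0 < sqrtTerm α :=
  sqrt_pos.2 (sub_pos.2 (one_lt_two_div_pi_mul h0 h))

lemma one_add_sqrtTerm_sq (h0 : 0 < α) (h : α < 2 / π) : 1 + sqrtTerm α ^ 2 = 2 / (π * α) := by
  rw [sqrtTerm, sq_sqrt (sub_pos.2 (one_lt_two_div_pi_mul h0 h)).le]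
  ring

lemma one_le_sqrtTerm_iff (h0 : 0 < α) : 1 ≤ sqrtTerm α ↔ α ≤ 1 / π := by
  rw [sqrtTerm, one_le_sqrt, le_sub_iff_add_le, le_div_iff₀ (by positivity), le_div_iff₀ pi_pos]
  constructor <;> intro <;> linarith

lemma sqrtTerm_le_one_iff (h0 : 0 < α) : sqrtTerm α ≤ 1 ↔ 1 / π ≤ α := by
  rw [sqrtTerm, sqrt_le_one, sub_le_iff_le_add, div_le_iff₀ (by positivity), div_le_iff₀ pi_pos]
  constructor <;> intro <;> linarith

lemma differentiableAt_sqrtTerm (h0 : 0 < α) (h : α < 2 / π) :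
    DifferentiableAt ℝ sqrtTerm α :=
  (((differentiableAt_const _).div (differentiableAt_id.const_mul π) (by positivity)).sub_const
    1).sqrt (sub_pos.2 (one_lt_two_div_pi_mul h0 h)).ne'

lemma mul_sqrtTerm_eq (h0 : 0 < α) : α * sqrtTerm α = √(2 * α / π - α ^ 2) := by
  rw [sqrtTerm, ← sqrt_sq h0.le, ← sqrt_mul (sq_nonneg α), sqrt_sq h0.le]
  congr 1
  field_simp

lemma tendsto_sqrtTerm_atTop : Tendsto sqrtTerm (𝓝[>] 0) atTop := by
  refine tendsto_sqrt_atTop.comp (tendsto_atTop_add_const_right _ (-1) ?_)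
  have h : (fun α : ℝ => 2 / (π * α)) = fun α => 2 / π * α⁻¹ := by ext; ring
  exact h ▸ tendsto_inv_nhdsGT_zero.const_mul_atTop (by positivity)

lemma hasDerivAt_phi (h0 : 0 < α) (h : α < 2 / π) : HasDerivAt phi (1 - sqrtTerm α) α := by
  have hs := (differentiableAt_sqrtTerm h0 h).hasDerivAt
  have hφ := ((hs.arctan.const_mul (2 / π)).sub ((hasDerivAt_id' α).mul hs)).sub
    ((hasDerivAt_const α 1).sub (hasDerivAt_id' α))
  refine hφ.congr_deriv ?_
  rw [one_add_sqrtTerm_sq h0 h]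
  field_simp
  ring

lemma phi_eq_two_div_pi_mul (h0 : 0 < α) (h : α < 2 / π) :
    phi α = 2 / π * (arctan (sqrtTerm α) + (1 - sqrtTerm α) / (1 + sqrtTerm α ^ 2) - π / 2) := by
  rw [phi, one_add_sqrtTerm_sq h0 h]
  field_simp
  ring

lemma phi_neg (h0 : 0 < α) (h : α < 2 / π) : phi α < 0 := by
  rw [phi_eq_two_div_pi_mul h0 h]
  exact mul_neg_of_pos_of_neg (by positivity)
    (by linarith [arctan_add_one_sub_div_lt_pi_div_two (sqrtTerm_pos h0 h)])

end

lemma phi_one_div_pi : phi (1 / π) = -(1 / 2) := by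
  have hs : sqrtTerm (1 / π) = 1 := by
    rw [sqrtTerm, mul_one_div_cancel pi_ne_zero]
    norm_num
  rw [phi, hs, arctan_one]
  field_simp
  ring

lemma isMinOn_phi : IsMinOn phi (Ioo 0 (2 / π)) (1 / π) := by
  have hpos : 0 < 1 / π := by positivity
  have hlt : 1 / π < 2 / π := by gcongr; norm_num
  have hleft (x : ℝ) (hx : x ∈ Ioo 0 (1 / π)) := hasDerivAt_phi hx.1 (hx.2.trans hlt)
  have hright (x : ℝ) (hx : x ∈ Ioo (1 / π) (2 / π)) := hasDerivAt_phi (hpos.trans hx.1) hx.2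
  refine isMinOn_Ioo_of_deriv (hasDerivAt_phi hpos hlt).continuousAt
    (fun x hx => (hleft x hx).differentiableAt.differentiableWithinAt)
    (fun x hx => (hright x hx).differentiableAt.differentiableWithinAt)
    (fun x hx => ?_) (fun x hx => ?_)
  · rw [(hleft x hx).deriv, sub_nonpos, one_le_sqrtTerm_iff hx.1]
    exact hx.2.le
  · rw [(hright x hx).deriv, sub_nonneg, sqrtTerm_le_one_iff (hpos.trans hx.1)]
    exact hx.1.le

lemma tendsto_phi : Tendsto phi (𝓝[>] 0) (𝓝 0) := by
  have harctan : Tendsto (fun α => 2 / π * arctan (sqrtTerm α)) (𝓝[>] 0) (𝓝 (2 / π * (π / 2))) :=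
    ((tendsto_arctan_atTop.mono_right nhdsWithin_le_nhds).comp tendsto_sqrtTerm_atTop).const_mul _
  have hmul : Tendsto (fun α => α * sqrtTerm α) (𝓝[>] 0) (𝓝 0) := by
    have hcont : Tendsto (fun α : ℝ => √(2 * α / π - α ^ 2)) (𝓝[>] 0) (𝓝 0) := by
      simpa using ((by fun_prop : Continuous fun α : ℝ => √(2 * α / π - α ^ 2)).tendsto 0).mono_left
        nhdsWithin_le_nhds
    refine hcont.congr' ?_
    filter_upwards [self_mem_nhdsWithin] with α hα using (mul_sqrtTerm_eq hα).symm
  have hlin : Tendsto (fun α : ℝ => 1 - α) (𝓝[>] 0) (𝓝 (1 - 0)) :=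
    (tendsto_const_nhds.sub tendsto_id).mono_left nhdsWithin_le_nhds
  have hlim : 2 / π * (π / 2) - 0 - (1 - 0) = 0 := by field_simp; ring
  have hφ := (harctan.sub hmul).sub hlin
  rw [hlim] at hφ
  exact hφ

theorem phi_properties :
    let φ : ℝ → ℝ := fun α =>
      (2 / Real.pi) * Real.arctan (Real.sqrt (2 / (Real.pi * α) - 1)) -
        α * Real.sqrt (2 / (Real.pi * α) - 1) - (1 - α)
    (∀ α : ℝ, 0 < α → α < 2 / Real.pi →
        HasDerivAt φ (1 - Real.sqrt (2 / (Real.pi * α) - 1)) α) ∧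
    φ (1 / Real.pi) = -(1 / 2) ∧
    (∀ α : ℝ, 0 < α → α < 2 / Real.pi → φ (1 / Real.pi) ≤ φ α) ∧
    (∀ α : ℝ, 0 < α → α < 2 / Real.pi → φ α < 0) ∧
    Filter.Tendsto φ (nhdsWithin 0 (Set.Ioi 0)) (nhds 0) :=
  ⟨fun _ h0 h => hasDerivAt_phi h0 h, phi_one_div_pi, fun _ h0 h => isMinOn_phi ⟨h0, h⟩,
    fun _ h0 h => phi_neg h0 h, tendsto_phi⟩
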